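/- arXiv:1805.00904 — 10 statements merged into one kernel-verified Lean document; each statement's English description precedes it below -/
import Mathlib

section
/- Let V be a finite nonempty vocabulary and ε > 0. Let π : V → V → ℝ be a kernel of probability vectors on V (each π(v, ·) is nonnegative and sums to 1) satisfying ε-differential privacy with all inputs adjacent: π(v₁, w) ≤ e^ε · π(v₂, w) for all v₁, v₂, w ∈ V. For a probability vector c on V, define the single-word output probability p_c(w) = ∑_{v∈V} c(v)·π(v, w). Then for every n ∈ ℕ, every output count vector r : V → ℕ with ∑_{w∈V} r(w) = n, and all probability vectors c₁, c₂ on V, the multinomial output probabilities satisfy (n! / ∏_{w∈V} r(w)!) · ∏_{w∈V} p_{c₁}(w)^{r(w)} ≤ e^{εn} · (n! / ∏_{w∈V} r(w)!) · ∏_{w∈V} p_{c₂}(w)^{r(w)}. That is, the SynTF mechanism producing a synthetic term-frequency vector of length n fulfills εn-differential privacy. -/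
/-- Basic differential privacy of the SynTF mechanism: if the per-word
substitution kernel `π` is `ε`-differentially private with all inputs adjacent,
then the multinomial output distribution of the synthetic term-frequency vector
of length `n` is `ε·n`-differentially private. -/
theorem syntf_basic_dp
    {V : Type*} [Fintype V] [Nonempty V]
    (ε : ℝ) (hε : 0 < ε)
    (π : V → V → ℝ) (hπ0 : ∀ v w, 0 ≤ π v w) (hπ1 : ∀ v, ∑ w, π v w = 1)
    (hdp : ∀ v₁ v₂ w : V, π v₁ w ≤ Real.exp ε * π v₂ w)
    (n : ℕ) (r : V → ℕ) (hr : ∑ w, r w = n)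
    (c₁ c₂ : V → ℝ)
    (hc₁0 : ∀ v, 0 ≤ c₁ v) (hc₁1 : ∑ v, c₁ v = 1)
    (hc₂0 : ∀ v, 0 ≤ c₂ v) (hc₂1 : ∑ v, c₂ v = 1) :
    ((n.factorial : ℝ) / ∏ w, ((r w).factorial : ℝ)) *
        ∏ w, (∑ v, c₁ v * π v w) ^ (r w)
      ≤ Real.exp (ε * n) *
        (((n.factorial : ℝ) / ∏ w, ((r w).factorial : ℝ)) *
          ∏ w, (∑ v, c₂ v * π v w) ^ (r w)) := by
  have key : ∀ w : V, ∑ v, c₁ v * π v w ≤ Real.exp ε * ∑ v, c₂ v * π v w := by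
    intro w
    have h1 : ∀ v' : V, ∑ v, c₁ v * π v w ≤ Real.exp ε * π v' w := by
      intro v'
      calc ∑ v, c₁ v * π v w ≤ ∑ v, c₁ v * (Real.exp ε * π v' w) := by
            apply Finset.sum_le_sum
            intro v _
            exact mul_le_mul_of_nonneg_left (hdp v v' w) (hc₁0 v)
        _ = Real.exp ε * π v' w := by
            rw [← Finset.sum_mul, hc₁1, one_mul]
    calc ∑ v, c₁ v * π v w = ∑ v', c₂ v' * ∑ v, c₁ v * π v w := by
          rw [← Finset.sum_mul, hc₂1, one_mul]
      _ ≤ ∑ v', c₂ v' * (Real.exp ε * π v' w) := by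
          apply Finset.sum_le_sum
          intro v' _
          exact mul_le_mul_of_nonneg_left (h1 v') (hc₂0 v')
      _ = Real.exp ε * ∑ v, c₂ v * π v w := by
          rw [Finset.mul_sum]
          exact Finset.sum_congr rfl fun v _ => by ring
  have hprod : ∏ w, (∑ v, c₁ v * π v w) ^ (r w)
      ≤ Real.exp (ε * n) * ∏ w, (∑ v, c₂ v * π v w) ^ (r w) := by
    have hexp : Real.exp (ε * n) = ∏ w : V, (Real.exp ε) ^ (r w) := by
      rw [← hr]
      push_cast
      rw [Finset.mul_sum, Real.exp_sum]
      exact Finset.prod_congr rfl fun w _ => by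
        rw [mul_comm, Real.exp_nat_mul]
    rw [hexp, ← Finset.prod_mul_distrib]
    apply Finset.prod_le_prod
    · intro w _
      exact pow_nonneg (Finset.sum_nonneg fun v _ => mul_nonneg (hc₁0 v) (hπ0 v w)) _
    · intro w _
      rw [← mul_pow]
      exact pow_le_pow_left₀
        (Finset.sum_nonneg fun v _ => mul_nonneg (hc₁0 v) (hπ0 v w)) (key w) _
  have hcoef : 0 ≤ (n.factorial : ℝ) / ∏ w, ((r w).factorial : ℝ) := by
    apply div_nonneg (by positivity)
    exact Finset.prod_nonneg fun w _ => by positivity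
  calc ((n.factorial : ℝ) / ∏ w, ((r w).factorial : ℝ)) *
        ∏ w, (∑ v, c₁ v * π v w) ^ (r w)
      ≤ ((n.factorial : ℝ) / ∏ w, ((r w).factorial : ℝ)) *
        (Real.exp (ε * n) * ∏ w, (∑ v, c₂ v * π v w) ^ (r w)) :=
        mul_le_mul_of_nonneg_left hprod hcoef
    _ = Real.exp (ε * n) * (((n.factorial : ℝ) / ∏ w, ((r w).factorial : ℝ)) *
          ∏ w, (∑ v, c₂ v * π v w) ^ (r w)) := by ring
end

section
/- Let X be a nonempty set and Z a finite set with |Z| = L ≥ 1. Let q : X × Z → ℝ be a rating function, let Δ > 0, and define Δ̄ = max_{x∈X} max_{z,z'∈Z} |q(x,z) − q(x,z')|. Let ε > 0 and define the Exponential mechanism probabilities π(x,z) = exp(ε·q(x,z)/(2Δ)) / ∑_{z'∈Z} exp(ε·q(x,z')/(2Δ)). Set ε̄ = ε·Δ̄/Δ and η = (e^{−ε̄/2} + L − 1)/(e^{ε̄/2} + L − 1). Then for all x₁, x₂ ∈ X and all z ∈ Z, π(x₁, z)/π(x₂, z) ≤ e^{ε̄} · η; in particular, considering all inputs adjacent,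 the privacy loss of the Exponential mechanism is at most ε̄ + ln η. -/
lemma expMech_aux (E l : ℝ) (hE : 0 < E) (hl : 1 ≤ l) :
    E * E * ((E⁻¹ + l - 1) / (E + l - 1)) = (1 + (l - 1) * E) / (1 + (l - 1) * E⁻¹) := by
  have h1 : 0 < E + l - 1 := by nlinarith
  have h2 : 0 < 1 + (l - 1) * E⁻¹ := by
    have : 0 ≤ (l - 1) * E⁻¹ := mul_nonneg (by linarith) (inv_pos.mpr hE).le
    linarith
  rw [← mul_div_assoc, div_eq_div_iff h1.ne' h2.ne']
  field_simp
  ring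

/-- Alternative bound for the privacy loss of the Exponential mechanism:
with all inputs adjacent, the ratio of output probabilities is bounded by
`e^ε̄ · η` where `ε̄ = ε·Δ̄/Δ` and `η = (e^{-ε̄/2} + L - 1)/(e^{ε̄/2} + L - 1)`. -/
theorem expMech_alternative_bound
    {X Z : Type*} [Nonempty X] [Fintype Z] [Nonempty Z]
    (L : ℕ) (hL : Fintype.card Z = L) (hL1 : 1 ≤ L)
    (q : X → Z → ℝ) (Δ : ℝ) (hΔ : 0 < Δ) (ε : ℝ) (hε : 0 < ε)
    (Δbar : ℝ)
    (hΔbar_ub : ∀ (x : X) (z z' : Z), |q x z - q x z'| ≤ Δbar)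
    (hΔbar_att : ∃ (x : X) (z z' : Z), |q x z - q x z'| = Δbar) :
    ∀ (x₁ x₂ : X) (z : Z),
      (Real.exp (ε * q x₁ z / (2 * Δ)) / ∑ z', Real.exp (ε * q x₁ z' / (2 * Δ))) /
        (Real.exp (ε * q x₂ z / (2 * Δ)) / ∑ z', Real.exp (ε * q x₂ z' / (2 * Δ)))
      ≤ Real.exp (ε * Δbar / Δ) *
          ((Real.exp (-(ε * Δbar / Δ) / 2) + (L : ℝ) - 1) /
            (Real.exp ((ε * Δbar / Δ) / 2) + (L : ℝ) - 1)) := by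
  classical
  intro x₁ x₂ z
  have hΔbar0 : 0 ≤ Δbar := (abs_nonneg _).trans (hΔbar_ub (Classical.arbitrary X) z z)
  set b := ε * Δbar / (2 * Δ) with hbdef
  have hb : 0 ≤ b := by positivity
  have hL1' : (1:ℝ) ≤ (L:ℝ) := by exact_mod_cast hL1
  -- pointwise exponent bounds
  have hkey : ∀ (x : X) (z' : Z),
      ε * q x z / (2*Δ) - b ≤ ε * q x z' / (2*Δ) ∧
      ε * q x z' / (2*Δ) ≤ ε * q x z / (2*Δ) + b := by
    intro x z'
    have h1 := abs_le.mp (hΔbar_ub x z z')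
    have h2 : ε * (q x z - q x z') / (2*Δ) ≤ ε * Δbar / (2*Δ) := by
      apply div_le_div_of_nonneg_right ?_ (by positivity)
      exact mul_le_mul_of_nonneg_left h1.2 hε.le
    have h3 : ε * (-Δbar) / (2*Δ) ≤ ε * (q x z - q x z') / (2*Δ) :=
      div_le_div_of_nonneg_right (mul_le_mul_of_nonneg_left h1.1 hε.le) (by positivity)
    have h3' : ε * (-Δbar) / (2*Δ) = -b := by rw [hbdef]; ring
    have heq : ε * (q x z - q x z') / (2*Δ) = ε * q x z / (2*Δ) - ε * q x z' / (2*Δ) := by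
      ring
    constructor <;> [linarith; linarith]
  have hcard : (Finset.univ.erase z).card = L - 1 := by
    rw [Finset.card_erase_of_mem (Finset.mem_univ z), Finset.card_univ, hL]
  have hLcast : ((L - 1 : ℕ) : ℝ) = (L:ℝ) - 1 := by
    push_cast [Nat.cast_sub hL1]; ring
  -- sum lower bound
  have hlow : ∀ x : X, Real.exp (ε * q x z/(2*Δ)) * (1 + ((L:ℝ)-1) * Real.exp (-b))
      ≤ ∑ z', Real.exp (ε * q x z' / (2*Δ)) := by
    intro x
    rw [← Finset.add_sum_erase Finset.univ _ (Finset.mem_univ z)]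
    have h1 := Finset.card_nsmul_le_sum (Finset.univ.erase z)
      (fun z' => Real.exp (ε * q x z' / (2*Δ))) (Real.exp (ε * q x z/(2*Δ) - b))
      (fun i _ => Real.exp_le_exp.mpr (hkey x i).1)
    rw [hcard, nsmul_eq_mul, hLcast] at h1
    have he : Real.exp (ε * q x z/(2*Δ) - b)
        = Real.exp (ε * q x z/(2*Δ)) * Real.exp (-b) := by
      rw [← Real.exp_add]; ring_nf
    rw [he] at h1
    nlinarith [h1]
  -- sum upper bound
  have hup : ∀ x : X, (∑ z', Real.exp (ε * q x z' / (2*Δ)))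
      ≤ Real.exp (ε * q x z/(2*Δ)) * (1 + ((L:ℝ)-1) * Real.exp b) := by
    intro x
    rw [← Finset.add_sum_erase Finset.univ _ (Finset.mem_univ z)]
    have h1 := Finset.sum_le_card_nsmul (Finset.univ.erase z)
      (fun z' => Real.exp (ε * q x z' / (2*Δ))) (Real.exp (ε * q x z/(2*Δ) + b))
      (fun i _ => Real.exp_le_exp.mpr (hkey x i).2)
    rw [hcard, nsmul_eq_mul, hLcast] at h1
    have he : Real.exp (ε * q x z/(2*Δ) + b)
        = Real.exp (ε * q x z/(2*Δ)) * Real.exp b := Real.exp_add _ _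
    rw [he] at h1
    nlinarith [h1]
  set Db := 1 + ((L:ℝ)-1) * Real.exp (-b) with hDb
  set Cb := 1 + ((L:ℝ)-1) * Real.exp b with hCb
  have hDbpos : 0 < Db := by
    have := Real.exp_pos (-b)
    nlinarith
  have hCbpos : 0 < Cb := by
    have := Real.exp_pos b
    nlinarith
  have hS1pos : 0 < ∑ z', Real.exp (ε * q x₁ z' / (2*Δ)) :=
    Finset.sum_pos (fun _ _ => Real.exp_pos _) Finset.univ_nonempty
  have hS2pos : 0 < ∑ z', Real.exp (ε * q x₂ z' / (2*Δ)) :=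
    Finset.sum_pos (fun _ _ => Real.exp_pos _) Finset.univ_nonempty
  have hE1 : 0 < Real.exp (ε * q x₁ z / (2*Δ)) := Real.exp_pos _
  have hE2 : 0 < Real.exp (ε * q x₂ z / (2*Δ)) := Real.exp_pos _
  -- step 1 : numerator ratio ≤ 1/Db
  have h1 : Real.exp (ε * q x₁ z / (2*Δ)) / (∑ z', Real.exp (ε * q x₁ z' / (2*Δ)))
      ≤ 1 / Db := by
    have hA : Real.exp (ε * q x₁ z / (2*Δ)) / (∑ z', Real.exp (ε * q x₁ z' / (2*Δ)))
        ≤ Real.exp (ε * q x₁ z / (2*Δ)) / (Real.exp (ε * q x₁ z/(2*Δ)) * Db) :=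
      div_le_div_of_nonneg_left hE1.le (by positivity) (hlow x₁)
    have hB : Real.exp (ε * q x₁ z / (2*Δ)) / (Real.exp (ε * q x₁ z/(2*Δ)) * Db)
        = 1 / Db := by
      field_simp
    linarith
  -- step 2 : denominator ratio ≥ 1/Cb
  have h2 : 1 / Cb ≤ Real.exp (ε * q x₂ z / (2*Δ)) / (∑ z', Real.exp (ε * q x₂ z' / (2*Δ))) := by
    have hA : Real.exp (ε * q x₂ z / (2*Δ)) / (Real.exp (ε * q x₂ z/(2*Δ)) * Cb)
        ≤ Real.exp (ε * q x₂ z / (2*Δ)) / (∑ z', Real.exp (ε * q x₂ z' / (2*Δ))) :=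
      div_le_div_of_nonneg_left hE2.le hS2pos (hup x₂)
    have hB : Real.exp (ε * q x₂ z / (2*Δ)) / (Real.exp (ε * q x₂ z/(2*Δ)) * Cb)
        = 1 / Cb := by
      field_simp
    linarith
  -- combine
  have hmain : (Real.exp (ε * q x₁ z / (2 * Δ)) / ∑ z', Real.exp (ε * q x₁ z' / (2 * Δ))) /
        (Real.exp (ε * q x₂ z / (2 * Δ)) / ∑ z', Real.exp (ε * q x₂ z' / (2 * Δ)))
      ≤ (1/Db) / (1/Cb) := by
    apply div_le_div₀ (by positivity) h1 (by positivity) h2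
  have hrw : (1/Db) / (1/Cb) = Cb / Db := by
    field_simp
  -- identify RHS
  have h2b : ε * Δbar / Δ = 2 * b := by
    rw [hbdef]; field_simp
  have hrhs : Real.exp (ε * Δbar / Δ) *
          ((Real.exp (-(ε * Δbar / Δ) / 2) + (L : ℝ) - 1) /
            (Real.exp ((ε * Δbar / Δ) / 2) + (L : ℝ) - 1)) = Cb / Db := by
    rw [h2b]
    have hE1b : (1:ℝ) ≤ (L:ℝ) := hL1'
    have he1 : -(2*b)/2 = -b := by ring
    have he2 : (2*b)/2 = b := by ring
    rw [he1, he2]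
    have hexp2 : Real.exp (2*b) = Real.exp b * Real.exp b := by
      rw [← Real.exp_add]; ring_nf
    have hneg : Real.exp (-b) = (Real.exp b)⁻¹ := Real.exp_neg b
    have hEpos : 0 < Real.exp b := Real.exp_pos b
    have hden1 : 0 < Real.exp b + (L:ℝ) - 1 := by nlinarith [Real.one_le_exp hb]
    rw [hCb, hDb, hexp2, hneg]
    exact expMech_aux (Real.exp b) (L:ℝ) (Real.exp_pos b) hL1'
  rw [hrhs]
  linarith [hmain, hrw.le, hrw.ge]
end

section
/- Let V be a finite vocabulary with |V| = K ≥ 1, let q : V × V → ℝ be a rating function, let Δ > 0 satisfy Δ = max_{w∈V} max_{v,v'∈V} (q(v,w) − q(v',w)) and also Δ ≥ max_{v∈V} max_{w,w'∈V} |q(v,w) − q(v,w')| (so the per-input variation Δ̄ does not exceed the all-adjacent sensitivity Δ). Let ε > 0 and define π(v,w) = exp(ε·q(v,w)/(2Δ)) / ∑_{w'∈V} exp(ε·q(v,w')/(2Δ)), and η = (e^{−ε/2} + K − 1)/(e^{ε/2} + K − 1). Then for every n ∈ ℕ, every output count vector r : V → ℕ with ∑_{w} r(w) = n, and all probability vectors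 c₁, c₂ on V, the multinomial output probabilities of the SynTF mechanism satisfy (n!/∏_w r(w)!) · ∏_{w} (∑_v c₁(v)π(v,w))^{r(w)} ≤ e^{(ε + ln η)·n} · (n!/∏_w r(w)!) · ∏_{w} (∑_v c₂(v)π(v,w))^{r(w)}. That is, SynTF fulfills ((ε + ln η(ε, K))·n)-differential privacy. -/
/-- Improved differential privacy bound for the SynTF mechanism: if the
substitution probabilities come from the Exponential mechanism with rating
function `q`, sensitivity `Δ` equal to the all-adjacent sensitivity and at
least the per-input variation, then SynTF with output length `n` fulfills
`((ε + ln η(ε, K))·n)`-differential privacy, where `K = |V|` and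
`η(ε, K) = (e^{-ε/2} + K - 1)/(e^{ε/2} + K - 1)`. -/
theorem syntf_improved_dp
    {V : Type*} [Fintype V] [Nonempty V]
    (K : ℕ) (hK : Fintype.card V = K) (hK1 : 1 ≤ K)
    (q : V → V → ℝ) (Δ : ℝ) (hΔ : 0 < Δ)
    (hΔ_ub : ∀ w v v' : V, q v w - q v' w ≤ Δ)
    (hΔ_att : ∃ w v v' : V, q v w - q v' w = Δ)
    (hΔbar : ∀ v w w' : V, |q v w - q v w'| ≤ Δ)
    (ε : ℝ) (hε : 0 < ε)
    (π : V → V → ℝ)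
    (hπ : ∀ v w, π v w =
      Real.exp (ε * q v w / (2 * Δ)) / ∑ w', Real.exp (ε * q v w' / (2 * Δ)))
    (η : ℝ)
    (hη : η = (Real.exp (-ε / 2) + (K : ℝ) - 1) / (Real.exp (ε / 2) + (K : ℝ) - 1))
    (n : ℕ) (r : V → ℕ) (hr : ∑ w, r w = n)
    (c₁ c₂ : V → ℝ)
    (hc₁0 : ∀ v, 0 ≤ c₁ v) (hc₁1 : ∑ v, c₁ v = 1)
    (hc₂0 : ∀ v, 0 ≤ c₂ v) (hc₂1 : ∑ v, c₂ v = 1) :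
    ((n.factorial : ℝ) / ∏ w, ((r w).factorial : ℝ)) *
        ∏ w, (∑ v, c₁ v * π v w) ^ (r w)
      ≤ Real.exp ((ε + Real.log η) * n) *
        (((n.factorial : ℝ) / ∏ w, ((r w).factorial : ℝ)) *
          ∏ w, (∑ v, c₂ v * π v w) ^ (r w)) := by
  classical
  have hΔ2 : (0:ℝ) < 2 * Δ := by linarith
  have hKR : (1:ℝ) ≤ (K:ℝ) := by exact_mod_cast hK1
  set A : ℝ := 1 + ((K:ℝ) - 1) * Real.exp (ε/2) with hAdef
  set B : ℝ := 1 + ((K:ℝ) - 1) * Real.exp (-ε/2) with hBdef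
  have hepos := Real.exp_pos (ε/2)
  have hepos' := Real.exp_pos (-ε/2)
  have hApos : 0 < A := by
    have : 0 ≤ ((K:ℝ) - 1) * Real.exp (ε/2) := mul_nonneg (by linarith) hepos.le
    rw [hAdef]; linarith
  have hBpos : 0 < B := by
    have : 0 ≤ ((K:ℝ) - 1) * Real.exp (-ε/2) := mul_nonneg (by linarith) hepos'.le
    rw [hBdef]; linarith
  -- the normalized row sums g w v
  have hterm_ub : ∀ v w w', Real.exp (ε * (q v w' - q v w) / (2*Δ)) ≤ Real.exp (ε/2) := by
    intro v w w'
    apply Real.exp_le_exp.mpr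
    have h := abs_le.mp (hΔbar v w' w)
    rw [div_le_div_iff₀ hΔ2 (by norm_num : (0:ℝ) < 2)]
    nlinarith [h.2]
  have hterm_lb : ∀ v w w', Real.exp (-ε/2) ≤ Real.exp (ε * (q v w' - q v w) / (2*Δ)) := by
    intro v w w'
    apply Real.exp_le_exp.mpr
    have h := abs_le.mp (hΔbar v w' w)
    rw [div_le_div_iff₀ (by norm_num : (0:ℝ) < 2) hΔ2]
    nlinarith [h.1]
  have hcard : ∀ w : V, (Finset.univ.erase w).card = K - 1 := by
    intro w
    rw [Finset.card_erase_of_mem (Finset.mem_univ w), Finset.card_univ, hK]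
  have hcastK : ((K - 1 : ℕ) : ℝ) = (K:ℝ) - 1 := by
    rw [Nat.cast_sub hK1]; norm_num
  have hsplit : ∀ w v, (∑ w', Real.exp (ε * (q v w' - q v w) / (2*Δ)))
      = 1 + ∑ w' ∈ Finset.univ.erase w, Real.exp (ε * (q v w' - q v w) / (2*Δ)) := by
    intro w v
    rw [← Finset.add_sum_erase _ _ (Finset.mem_univ w)]
    simp
  have hgA : ∀ w v, (∑ w', Real.exp (ε * (q v w' - q v w) / (2*Δ))) ≤ A := by
    intro w v
    rw [hsplit w v, hAdef]
    have h := Finset.sum_le_card_nsmul (Finset.univ.erase w)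
      (fun w' => Real.exp (ε * (q v w' - q v w) / (2*Δ))) (Real.exp (ε/2))
      (fun w' _ => hterm_ub v w w')
    rw [hcard w, nsmul_eq_mul, hcastK] at h
    linarith
  have hgB : ∀ w v, B ≤ (∑ w', Real.exp (ε * (q v w' - q v w) / (2*Δ))) := by
    intro w v
    rw [hsplit w v, hBdef]
    have h := Finset.card_nsmul_le_sum (Finset.univ.erase w)
      (fun w' => Real.exp (ε * (q v w' - q v w) / (2*Δ))) (Real.exp (-ε/2))
      (fun w' _ => hterm_lb v w w')
    rw [hcard w, nsmul_eq_mul, hcastK] at h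
    linarith
  -- π v w = 1 / g w v
  have hπg : ∀ v w, π v w = 1 / (∑ w', Real.exp (ε * (q v w' - q v w) / (2*Δ))) := by
    intro v w
    have hsum : (∑ w', Real.exp (ε * q v w' / (2*Δ)))
        = Real.exp (ε * q v w / (2*Δ)) * ∑ w', Real.exp (ε * (q v w' - q v w) / (2*Δ)) := by
      rw [Finset.mul_sum]
      apply Finset.sum_congr rfl
      intro w' _
      rw [← Real.exp_add]
      ring_nf
    rw [hπ, hsum, ← div_div, div_self (Real.exp_ne_zero _)]
  -- per-coordinate bound
  have hπub : ∀ v w, π v w ≤ 1 / B := by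
    intro v w
    rw [hπg]
    exact one_div_le_one_div_of_le hBpos (hgB w v)
  have hπlb : ∀ v w, 1 / A ≤ π v w := by
    intro v w
    rw [hπg]
    exact one_div_le_one_div_of_le (by positivity) (hgA w v)
  have hπ0 : ∀ v w, 0 ≤ π v w := by
    intro v w
    exact le_trans (by positivity) (hπlb v w)
  have key : ∀ w, (∑ v, c₁ v * π v w) ≤ (A/B) * ∑ v, c₂ v * π v w := by
    intro w
    have h1 : (∑ v, c₁ v * π v w) ≤ 1 / B := by
      calc (∑ v, c₁ v * π v w) ≤ ∑ v, c₁ v * (1/B) :=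
            Finset.sum_le_sum (fun v _ => mul_le_mul_of_nonneg_left (hπub v w) (hc₁0 v))
        _ = 1 / B := by rw [← Finset.sum_mul, hc₁1, one_mul]
    have h2 : 1 / A ≤ ∑ v, c₂ v * π v w := by
      calc (1:ℝ) / A = ∑ v, c₂ v * (1/A) := by rw [← Finset.sum_mul, hc₂1, one_mul]
        _ ≤ ∑ v, c₂ v * π v w :=
            Finset.sum_le_sum (fun v _ => mul_le_mul_of_nonneg_left (hπlb v w) (hc₂0 v))
    calc (∑ v, c₁ v * π v w) ≤ 1 / B := h1
      _ = (A/B) * (1/A) := by field_simp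
      _ ≤ (A/B) * ∑ v, c₂ v * π v w := by
          apply mul_le_mul_of_nonneg_left h2 (by positivity)
  have hsum1nn : ∀ w, 0 ≤ ∑ v, c₁ v * π v w := by
    intro w
    exact Finset.sum_nonneg (fun v _ => mul_nonneg (hc₁0 v) (hπ0 v w))
  -- product bound
  have hmain : (∏ w, (∑ v, c₁ v * π v w) ^ (r w))
      ≤ (A/B)^n * ∏ w, (∑ v, c₂ v * π v w) ^ (r w) := by
    calc (∏ w, (∑ v, c₁ v * π v w) ^ (r w))
        ≤ ∏ w, ((A/B) * ∑ v, c₂ v * π v w) ^ (r w) := by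
          apply Finset.prod_le_prod
          · intro w _; exact pow_nonneg (hsum1nn w) _
          · intro w _; exact pow_le_pow_left₀ (hsum1nn w) (key w) _
      _ = (A/B)^n * ∏ w, (∑ v, c₂ v * π v w) ^ (r w) := by
          simp only [mul_pow, Finset.prod_mul_distrib, Finset.prod_pow_eq_pow_sum, hr]
  -- identify the exponential factor
  have h1 : Real.exp (ε/2) * Real.exp (-ε/2) = 1 := by
    rw [← Real.exp_add, show ε/2 + -ε/2 = 0 by ring, Real.exp_zero]
  have h2 : Real.exp ε * Real.exp (-ε/2) = Real.exp (ε/2) := by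
    rw [← Real.exp_add, show ε + -ε/2 = ε/2 by ring]
  have hden : 0 < Real.exp (ε/2) + (K:ℝ) - 1 := by linarith
  have hnum : 0 < Real.exp (-ε/2) + (K:ℝ) - 1 := by linarith
  have hηpos : 0 < η := by
    rw [hη]; exact div_pos hnum hden
  have hBe : B * Real.exp (ε/2) = Real.exp (ε/2) + (K:ℝ) - 1 := by
    rw [hBdef]; linear_combination ((K:ℝ) - 1) * h1
  have hAe : A * Real.exp (-ε/2) = Real.exp (-ε/2) + (K:ℝ) - 1 := by
    rw [hAdef]; linear_combination ((K:ℝ) - 1) * h1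
  have hABη : A / B = Real.exp ε * η := by
    rw [hη, ← hAe, ← hBe, mul_div_assoc',
      div_eq_div_iff (ne_of_gt hBpos) (by positivity)]
    linear_combination (-(A*B)) * h2
  have hexp : Real.exp ((ε + Real.log η) * n) = (A/B)^n := by
    rw [mul_comm, Real.exp_nat_mul, Real.exp_add, Real.exp_log hηpos, hABη]
  rw [hexp]
  have hC : 0 ≤ (n.factorial : ℝ) / ∏ w, ((r w).factorial : ℝ) := by positivity
  calc ((n.factorial : ℝ) / ∏ w, ((r w).factorial : ℝ)) * ∏ w, (∑ v, c₁ v * π v w) ^ (r w)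
      ≤ ((n.factorial : ℝ) / ∏ w, ((r w).factorial : ℝ)) *
        ((A/B)^n * ∏ w, (∑ v, c₂ v * π v w) ^ (r w)) :=
        mul_le_mul_of_nonneg_left hmain hC
    _ = (A/B)^n * (((n.factorial : ℝ) / ∏ w, ((r w).factorial : ℝ)) *
        ∏ w, (∑ v, c₂ v * π v w) ^ (r w)) := by ring
end

section
/- Let Z be a finite nonempty set, x a fixed input, q(x, ·) : Z → ℝ a rating function, Δ > 0 and ε > 0. Let τ ∈ ℝ, and split Z into T = {z ∈ Z : q(x,z) ≥ τ} and T̄ = Z \ T; assume both T and T̄ are nonempty. Let c = τ − max_{z∈T̄} q(x,z). Then the probability that the Exponential mechanism outputs an element of T satisfies the lower bound ∑_{z∈T} exp(ε·q(x,z)/(2Δ)) / ∑_{z∈Z} exp(ε·q(x,z)/(2Δ)) ≥ |T| / (|T| + |T̄|·exp(−ε·c/(2Δ))). -/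
/-- Lower bound on the utility of the Exponential mechanism: the probability
of outputting an element with rating at least `τ` is at least
`|T| / (|T| + |T̄|·e^{-εc/(2Δ)})`, where `c` is the gap between `τ` and the
next lower rating score. -/
theorem expMech_utility_lower_bound
    {Z : Type*} [Fintype Z] [Nonempty Z] [DecidableEq Z]
    (q : Z → ℝ) (Δ ε τ : ℝ) (hΔ : 0 < Δ) (hε : 0 < ε)
    (T : Finset Z) (hT : ∀ z, z ∈ T ↔ τ ≤ q z)
    (hTne : T.Nonempty) (hTc : Tᶜ.Nonempty)
    (c : ℝ) (hc : c = τ - Tᶜ.sup' hTc q) :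
    (T.card : ℝ) / ((T.card : ℝ) + (Tᶜ.card : ℝ) * Real.exp (-(ε * c) / (2 * Δ)))
      ≤ (∑ z ∈ T, Real.exp (ε * q z / (2 * Δ))) /
          (∑ z, Real.exp (ε * q z / (2 * Δ))) := by
  set A := Real.exp (ε * τ / (2 * Δ)) with hA
  set e := Real.exp (-(ε * c) / (2 * Δ)) with he
  have hApos : 0 < A := Real.exp_pos _
  have hepos : 0 < e := Real.exp_pos _
  set ST := ∑ z ∈ T, Real.exp (ε * q z / (2 * Δ)) with hSTdef
  set SC := ∑ z ∈ Tᶜ, Real.exp (ε * q z / (2 * Δ)) with hSCdef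
  have hsplit : (∑ z, Real.exp (ε * q z / (2 * Δ))) = ST + SC :=
    (Finset.sum_add_sum_compl T _).symm
  have hSTpos : 0 < ST :=
    Finset.sum_pos (fun z _ => Real.exp_pos _) hTne
  have hSCpos : 0 < SC :=
    Finset.sum_pos (fun z _ => Real.exp_pos _) hTc
  -- lower bound on ST
  have hSTlb : (T.card : ℝ) * A ≤ ST := by
    have := Finset.card_nsmul_le_sum T (fun z => Real.exp (ε * q z / (2 * Δ))) A
      (fun z hz => by
        have hq : τ ≤ q z := (hT z).mp hz
        exact Real.exp_le_exp.mpr (by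
          apply div_le_div_of_nonneg_right ?_ (by linarith)
          nlinarith))
    simpa [nsmul_eq_mul] using this
  -- upper bound on SC
  have hSCub : SC ≤ (Tᶜ.card : ℝ) * (A * e) := by
    have hAe : A * e = Real.exp (ε * (τ - c) / (2 * Δ)) := by
      rw [hA, he, ← Real.exp_add]
      ring_nf
    have := Finset.sum_le_card_nsmul Tᶜ (fun z => Real.exp (ε * q z / (2 * Δ))) (A * e)
      (fun z hz => by
        have hq : q z ≤ τ - c := by
          have h1 : q z ≤ Tᶜ.sup' hTc q := Finset.le_sup' q hz
          linarith
        rw [hAe]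
        exact Real.exp_le_exp.mpr (by
          apply div_le_div_of_nonneg_right ?_ (by linarith)
          nlinarith))
    simpa [nsmul_eq_mul] using this
  have hTcard : (0:ℝ) < T.card := by
    exact_mod_cast Finset.card_pos.mpr hTne
  have hTccard : (0:ℝ) ≤ Tᶜ.card := by positivity
  rw [hsplit, div_le_div_iff₀ (by positivity) (by positivity)]
  nlinarith [mul_le_mul_of_nonneg_left hSCub hTcard.le,
    mul_le_mul_of_nonneg_right hSTlb (mul_nonneg hTccard hepos.le)]
end

section
/- Let Z be a finite nonempty set, x a fixed input, q(x, ·) : Z → ℝ a rating function, Δ > 0 and ε > 0. Let τ ∈ ℝ, and split Z into T = {z ∈ Z : q(x,z) ≥ τ} and T̄ = Z \ T; assume both T and T̄ are nonempty. Let Δ̄ = max_{z∈Z} q(x,z) − min_{z∈Z} q(x,z). Then the probability that the Exponential mechanism outputs an element of T satisfies the upper bound ∑_{z∈T} exp(ε·q(x,z)/(2Δ)) / ∑_{z∈Z} exp(ε·q(x,z)/(2Δ)) ≤ |T| / (|T| + |T̄|·exp(−ε·Δ̄/(2Δ))). -/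
/-- Upper bound on the utility of the Exponential mechanism: the probability
of outputting an element with rating at least `τ` is at most
`|T| / (|T| + |T̄|·e^{-εΔ̄/(2Δ)})`, where `Δ̄` is the range of rating scores. -/
theorem expMech_utility_upper_bound
    {Z : Type*} [Fintype Z] [Nonempty Z] [DecidableEq Z]
    (q : Z → ℝ) (Δ ε τ : ℝ) (hΔ : 0 < Δ) (hε : 0 < ε)
    (T : Finset Z) (hT : ∀ z, z ∈ T ↔ τ ≤ q z)
    (hTne : T.Nonempty) (hTc : Tᶜ.Nonempty)
    (Δbar : ℝ)
    (hΔbar : Δbar = Finset.univ.sup' Finset.univ_nonempty q -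
        Finset.univ.inf' Finset.univ_nonempty q) :
    (∑ z ∈ T, Real.exp (ε * q z / (2 * Δ))) /
        (∑ z, Real.exp (ε * q z / (2 * Δ)))
      ≤ (T.card : ℝ) /
          ((T.card : ℝ) + (Tᶜ.card : ℝ) * Real.exp (-(ε * Δbar) / (2 * Δ))) := by
  set s := Finset.univ.sup' Finset.univ_nonempty q with hs
  set i := Finset.univ.inf' Finset.univ_nonempty q with hi
  set f : Z → ℝ := fun z => Real.exp (ε * q z / (2 * Δ)) with hf
  have hfpos : ∀ z : Z, 0 < f z := fun z => Real.exp_pos _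
  have hTcard : (0 : ℝ) < T.card := by exact_mod_cast Finset.card_pos.2 hTne
  have hTccard : (0 : ℝ) < Tᶜ.card := by exact_mod_cast Finset.card_pos.2 hTc
  have hEpos : (0 : ℝ) < Real.exp (-(ε * Δbar) / (2 * Δ)) := Real.exp_pos _
  have hNle : ∑ z ∈ T, f z ≤ (T.card : ℝ) * Real.exp (ε * s / (2 * Δ)) := by
    calc ∑ z ∈ T, f z ≤ ∑ _z ∈ T, Real.exp (ε * s / (2 * Δ)) := by
          refine Finset.sum_le_sum fun z _ => Real.exp_le_exp.2 ?_
          gcongr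
          exact Finset.le_sup' q (Finset.mem_univ z)
      _ = (T.card : ℝ) * Real.exp (ε * s / (2 * Δ)) := by
          rw [Finset.sum_const, nsmul_eq_mul]
  have hMge : (Tᶜ.card : ℝ) * Real.exp (ε * i / (2 * Δ)) ≤ ∑ z ∈ Tᶜ, f z := by
    calc (Tᶜ.card : ℝ) * Real.exp (ε * i / (2 * Δ))
        = ∑ _z ∈ Tᶜ, Real.exp (ε * i / (2 * Δ)) := by
          rw [Finset.sum_const, nsmul_eq_mul]
      _ ≤ ∑ z ∈ Tᶜ, f z := by
          refine Finset.sum_le_sum fun z _ => Real.exp_le_exp.2 ?_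
          gcongr
          exact Finset.inf'_le q (Finset.mem_univ z)
  have hEE : Real.exp (ε * s / (2 * Δ)) * Real.exp (-(ε * Δbar) / (2 * Δ))
      = Real.exp (ε * i / (2 * Δ)) := by
    rw [← Real.exp_add, hΔbar]
    congr 1
    field_simp
    ring
  have hden : (0 : ℝ) < ∑ z, f z :=
    Finset.sum_pos (fun z _ => hfpos z) Finset.univ_nonempty
  have hden2 : (0 : ℝ) < (T.card : ℝ) + (Tᶜ.card : ℝ) * Real.exp (-(ε * Δbar) / (2 * Δ)) := by
    positivity
  rw [div_le_div_iff₀ hden hden2]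
  have hsplit : (∑ z, f z) = (∑ z ∈ T, f z) + ∑ z ∈ Tᶜ, f z :=
    (Finset.sum_add_sum_compl T f).symm
  rw [hsplit]
  have hNpos : (0 : ℝ) < ∑ z ∈ T, f z := Finset.sum_pos (fun z _ => hfpos z) hTne
  have key : (∑ z ∈ T, f z) * ((Tᶜ.card : ℝ) * Real.exp (-(ε * Δbar) / (2 * Δ)))
      ≤ (T.card : ℝ) * ∑ z ∈ Tᶜ, f z := by
    calc (∑ z ∈ T, f z) * ((Tᶜ.card : ℝ) * Real.exp (-(ε * Δbar) / (2 * Δ)))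
        ≤ ((T.card : ℝ) * Real.exp (ε * s / (2 * Δ))) *
            ((Tᶜ.card : ℝ) * Real.exp (-(ε * Δbar) / (2 * Δ))) :=
          mul_le_mul_of_nonneg_right hNle (mul_nonneg hTccard.le hEpos.le)
      _ = (T.card : ℝ) * ((Tᶜ.card : ℝ) *
            (Real.exp (ε * s / (2 * Δ)) * Real.exp (-(ε * Δbar) / (2 * Δ)))) := by ring
      _ = (T.card : ℝ) * ((Tᶜ.card : ℝ) * Real.exp (ε * i / (2 * Δ))) := by rw [hEE]
      _ ≤ (T.card : ℝ) * ∑ z ∈ Tᶜ, f z := mul_le_mul_of_nonneg_left hMge hTcard.le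
  nlinarith [key]
end

section
/- Let Z be a finite nonempty set, x a fixed input, q(x, ·) : Z → ℝ a rating function, Δ > 0 and ε > 0. Let τ ∈ ℝ with T = {z ∈ Z : q(x,z) ≥ τ} and T̄ = Z \ T both nonempty, and let Δ̄ = max_{z∈Z} q(x,z) − min_{z∈Z} q(x,z) > 0. Let p ∈ (0,1). If the Exponential mechanism outputs an element of T with probability at least p, i.e. ∑_{z∈T} exp(ε·q(x,z)/(2Δ)) / ∑_{z∈Z} exp(ε·q(x,z)/(2Δ)) ≥ p, then necessarily ε ≥ (2Δ/Δ̄) · ln( (p/(1−p)) · (|T̄|/|T|) ). -/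
/-- Necessary condition on `ε`: if the Exponential mechanism outputs an
element with rating at least `τ` with probability at least `p`, then
`ε ≥ (2Δ/Δ̄) · ln((p/(1-p)) · (|T̄|/|T|))`. -/
theorem expMech_necessary_condition
    {Z : Type*} [Fintype Z] [Nonempty Z] [DecidableEq Z]
    (q : Z → ℝ) (Δ ε τ : ℝ) (hΔ : 0 < Δ) (hε : 0 < ε)
    (T : Finset Z) (hT : ∀ z, z ∈ T ↔ τ ≤ q z)
    (hTne : T.Nonempty) (hTc : Tᶜ.Nonempty)
    (Δbar : ℝ)
    (hΔbar : Δbar = Finset.univ.sup' Finset.univ_nonempty q -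
        Finset.univ.inf' Finset.univ_nonempty q)
    (hΔbar_pos : 0 < Δbar)
    (p : ℝ) (hp0 : 0 < p) (hp1 : p < 1)
    (hprob : p ≤ (∑ z ∈ T, Real.exp (ε * q z / (2 * Δ))) /
        (∑ z, Real.exp (ε * q z / (2 * Δ)))) :
    (2 * Δ / Δbar) * Real.log ((p / (1 - p)) * ((Tᶜ.card : ℝ) / (T.card : ℝ)))
      ≤ ε := by
  set M := Finset.univ.sup' Finset.univ_nonempty q with hM
  set m := Finset.univ.inf' Finset.univ_nonempty q with hm
  have h2Δ : (0:ℝ) < 2 * Δ := by linarith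
  have hST : (0:ℝ) < ∑ z ∈ T, Real.exp (ε * q z / (2 * Δ)) :=
    Finset.sum_pos (fun z _ => Real.exp_pos _) hTne
  have hSTc : (0:ℝ) < ∑ z ∈ Tᶜ, Real.exp (ε * q z / (2 * Δ)) :=
    Finset.sum_pos (fun z _ => Real.exp_pos _) hTc
  have hsplit : (∑ z, Real.exp (ε * q z / (2 * Δ))) =
      (∑ z ∈ T, Real.exp (ε * q z / (2 * Δ))) +
      (∑ z ∈ Tᶜ, Real.exp (ε * q z / (2 * Δ))) :=
    (Finset.sum_add_sum_compl T _).symm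
  have hSpos : (0:ℝ) < ∑ z, Real.exp (ε * q z / (2 * Δ)) := by
    rw [hsplit]; linarith
  have h1 : p * (∑ z, Real.exp (ε * q z / (2 * Δ))) ≤
      ∑ z ∈ T, Real.exp (ε * q z / (2 * Δ)) :=
    (le_div_iff₀ hSpos).mp hprob
  have hkey : p * (∑ z ∈ Tᶜ, Real.exp (ε * q z / (2 * Δ))) ≤
      (1 - p) * (∑ z ∈ T, Real.exp (ε * q z / (2 * Δ))) := by
    rw [hsplit] at h1; nlinarith
  have hTbound : (∑ z ∈ T, Real.exp (ε * q z / (2 * Δ))) ≤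
      (T.card : ℝ) * Real.exp (ε * M / (2 * Δ)) := by
    calc (∑ z ∈ T, Real.exp (ε * q z / (2 * Δ)))
        ≤ ∑ _z ∈ T, Real.exp (ε * M / (2 * Δ)) := by
          refine Finset.sum_le_sum fun z _ => Real.exp_le_exp.mpr ?_
          have hq : q z ≤ M := Finset.le_sup' q (Finset.mem_univ z)
          have := mul_le_mul_of_nonneg_left hq hε.le
          exact div_le_div_of_nonneg_right (by linarith) h2Δ.le
      _ = (T.card : ℝ) * Real.exp (ε * M / (2 * Δ)) := by
          rw [Finset.sum_const, nsmul_eq_mul]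
  have hTcbound : (Tᶜ.card : ℝ) * Real.exp (ε * m / (2 * Δ)) ≤
      (∑ z ∈ Tᶜ, Real.exp (ε * q z / (2 * Δ))) := by
    calc (Tᶜ.card : ℝ) * Real.exp (ε * m / (2 * Δ))
        = ∑ _z ∈ Tᶜ, Real.exp (ε * m / (2 * Δ)) := by
          rw [Finset.sum_const, nsmul_eq_mul]
      _ ≤ _ := by
          refine Finset.sum_le_sum fun z _ => Real.exp_le_exp.mpr ?_
          have hq : m ≤ q z := Finset.inf'_le q (Finset.mem_univ z)
          have := mul_le_mul_of_nonneg_left hq hε.le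
          exact div_le_div_of_nonneg_right (by linarith) h2Δ.le
  have hcard_T : (0:ℝ) < (T.card : ℝ) := by
    exact_mod_cast Finset.card_pos.mpr hTne
  have hcard_Tc : (0:ℝ) < (Tᶜ.card : ℝ) := by
    exact_mod_cast Finset.card_pos.mpr hTc
  have h1p : (0:ℝ) < 1 - p := by linarith
  have hchain : p * ((Tᶜ.card : ℝ) * Real.exp (ε * m / (2 * Δ))) ≤
      (1 - p) * ((T.card : ℝ) * Real.exp (ε * M / (2 * Δ))) := by
    calc p * ((Tᶜ.card : ℝ) * Real.exp (ε * m / (2 * Δ)))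
        ≤ p * (∑ z ∈ Tᶜ, Real.exp (ε * q z / (2 * Δ))) :=
          mul_le_mul_of_nonneg_left hTcbound hp0.le
      _ ≤ (1 - p) * (∑ z ∈ T, Real.exp (ε * q z / (2 * Δ))) := hkey
      _ ≤ (1 - p) * ((T.card : ℝ) * Real.exp (ε * M / (2 * Δ))) :=
          mul_le_mul_of_nonneg_left hTbound h1p.le
  have hratio : (p / (1 - p)) * ((Tᶜ.card : ℝ) / (T.card : ℝ)) ≤
      Real.exp (ε * Δbar / (2 * Δ)) := by
    have hexp : Real.exp (ε * Δbar / (2 * Δ)) =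
        Real.exp (ε * M / (2 * Δ)) / Real.exp (ε * m / (2 * Δ)) := by
      rw [← Real.exp_sub]
      congr 1
      rw [hΔbar]; ring
    rw [hexp, div_mul_div_comm, div_le_div_iff₀ (by positivity) (Real.exp_pos _)]
    nlinarith [Real.exp_pos (ε * m / (2 * Δ)), Real.exp_pos (ε * M / (2 * Δ))]
  have hlog : Real.log ((p / (1 - p)) * ((Tᶜ.card : ℝ) / (T.card : ℝ))) ≤
      ε * Δbar / (2 * Δ) := by
    rw [Real.log_le_iff_le_exp (by positivity)]
    exact hratio
  have hc : (0:ℝ) < 2 * Δ / Δbar := by positivity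
  calc (2 * Δ / Δbar) * Real.log ((p / (1 - p)) * ((Tᶜ.card : ℝ) / (T.card : ℝ)))
      ≤ (2 * Δ / Δbar) * (ε * Δbar / (2 * Δ)) :=
        mul_le_mul_of_nonneg_left hlog hc.le
    _ = ε := by field_simp
end

section
/- Let Z be a finite nonempty set, x a fixed input, q(x, ·) : Z → ℝ a rating function, Δ > 0 and ε > 0. Let τ ∈ ℝ with T = {z ∈ Z : q(x,z) ≥ τ} and T̄ = Z \ T both nonempty, and let c = τ − max_{z∈T̄} q(x,z) > 0. Let p ∈ (0,1). If ε ≥ (2Δ/c) · ln( (p/(1−p)) · (|T̄|/|T|) ), then the Exponential mechanism outputs an element of T with probability at least p, i.e. ∑_{z∈T} exp(ε·q(x,z)/(2Δ)) / ∑_{z∈Z} exp(ε·q(x,z)/(2Δ)) ≥ p. -/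
/-- Sufficient condition on `ε`: if `ε ≥ (2Δ/c) · ln((p/(1-p)) · (|T̄|/|T|))`,
where `c` is the gap between `τ` and the next lower rating score, then the
Exponential mechanism outputs an element with rating at least `τ` with
probability at least `p`. -/
theorem expMech_sufficient_condition
    {Z : Type*} [Fintype Z] [Nonempty Z] [DecidableEq Z]
    (q : Z → ℝ) (Δ ε τ : ℝ) (hΔ : 0 < Δ) (hε : 0 < ε)
    (T : Finset Z) (hT : ∀ z, z ∈ T ↔ τ ≤ q z)
    (hTne : T.Nonempty) (hTc : Tᶜ.Nonempty)
    (c : ℝ) (hc : c = τ - Tᶜ.sup' hTc q) (hcpos : 0 < c)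
    (p : ℝ) (hp0 : 0 < p) (hp1 : p < 1)
    (hεbig : (2 * Δ / c) * Real.log ((p / (1 - p)) * ((Tᶜ.card : ℝ) / (T.card : ℝ)))
        ≤ ε) :
    p ≤ (∑ z ∈ T, Real.exp (ε * q z / (2 * Δ))) /
        (∑ z, Real.exp (ε * q z / (2 * Δ))) := by
  have h1p : 0 < 1 - p := by linarith
  have h2Δ : 0 < 2 * Δ := by linarith
  have hT0 : (0:ℝ) < T.card := by exact_mod_cast Finset.card_pos.mpr hTne
  have hTc0 : (0:ℝ) < Tᶜ.card := by exact_mod_cast Finset.card_pos.mpr hTc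
  set A : ℝ := (p / (1 - p)) * ((Tᶜ.card : ℝ) / (T.card : ℝ)) with hAdef
  have hA : 0 < A := by positivity
  -- log A ≤ ε c / (2Δ)
  have hlog : Real.log A ≤ ε * c / (2 * Δ) := by
    rw [div_mul_eq_mul_div, div_le_iff₀ hcpos] at hεbig
    rw [le_div_iff₀ h2Δ]
    nlinarith [hεbig]
  have hAle : A ≤ Real.exp (ε * c / (2 * Δ)) :=
    (Real.log_le_iff_le_exp hA).mp hlog
  -- key inequality
  have hkey : p * (Tᶜ.card : ℝ) * Real.exp (ε * (τ - c) / (2 * Δ)) ≤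
      (1 - p) * (T.card : ℝ) * Real.exp (ε * τ / (2 * Δ)) := by
    have h1 : p * (Tᶜ.card : ℝ) ≤
        (1 - p) * (T.card : ℝ) * Real.exp (ε * c / (2 * Δ)) := by
      have := mul_le_mul_of_nonneg_left hAle (by positivity :
        (0:ℝ) ≤ (1 - p) * (T.card : ℝ))
      rw [hAdef] at this
      calc p * (Tᶜ.card : ℝ) = (1 - p) * (T.card : ℝ) * A := by
            rw [hAdef]; field_simp
        _ ≤ _ := this
    have h2 := mul_le_mul_of_nonneg_right h1
      (Real.exp_nonneg (ε * (τ - c) / (2 * Δ)))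
    calc p * (Tᶜ.card : ℝ) * Real.exp (ε * (τ - c) / (2 * Δ)) ≤
        (1 - p) * (T.card : ℝ) * Real.exp (ε * c / (2 * Δ)) *
          Real.exp (ε * (τ - c) / (2 * Δ)) := h2
      _ = (1 - p) * (T.card : ℝ) * Real.exp (ε * τ / (2 * Δ)) := by
          rw [mul_assoc, ← Real.exp_add]; ring_nf
  -- sum bounds
  have hST : (T.card : ℝ) * Real.exp (ε * τ / (2 * Δ)) ≤
      ∑ z ∈ T, Real.exp (ε * q z / (2 * Δ)) := by
    calc (T.card : ℝ) * Real.exp (ε * τ / (2 * Δ))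
        = ∑ _z ∈ T, Real.exp (ε * τ / (2 * Δ)) := by
          rw [Finset.sum_const, nsmul_eq_mul]
      _ ≤ _ := by
          apply Finset.sum_le_sum
          intro z hz
          have hq : τ ≤ q z := (hT z).mp hz
          gcongr
  have hSC : ∑ z ∈ Tᶜ, Real.exp (ε * q z / (2 * Δ)) ≤
      (Tᶜ.card : ℝ) * Real.exp (ε * (τ - c) / (2 * Δ)) := by
    calc ∑ z ∈ Tᶜ, Real.exp (ε * q z / (2 * Δ))
        ≤ ∑ _z ∈ Tᶜ, Real.exp (ε * (τ - c) / (2 * Δ)) := by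
          apply Finset.sum_le_sum
          intro z hz
          have hq : q z ≤ τ - c := by
            have hsup : q z ≤ Tᶜ.sup' hTc q := Finset.le_sup' q hz
            linarith [hc, hsup]
          gcongr
      _ = (Tᶜ.card : ℝ) * Real.exp (ε * (τ - c) / (2 * Δ)) := by
          rw [Finset.sum_const, nsmul_eq_mul]
  -- put things together
  have hsplit : (∑ z, Real.exp (ε * q z / (2 * Δ))) =
      (∑ z ∈ T, Real.exp (ε * q z / (2 * Δ))) +
      (∑ z ∈ Tᶜ, Real.exp (ε * q z / (2 * Δ))) :=
    (Finset.sum_add_sum_compl T _).symm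
  have hSTpos : 0 < ∑ z ∈ T, Real.exp (ε * q z / (2 * Δ)) :=
    Finset.sum_pos (fun z _ => Real.exp_pos _) hTne
  have hSCpos : 0 < ∑ z ∈ Tᶜ, Real.exp (ε * q z / (2 * Δ)) :=
    Finset.sum_pos (fun z _ => Real.exp_pos _) hTc
  rw [hsplit, le_div_iff₀ (by linarith)]
  nlinarith [mul_le_mul_of_nonneg_left hSC hp0.le,
    mul_le_mul_of_nonneg_left hST h1p.le, hkey]
end

section
/- Let Z be a finite nonempty set, x a fixed input, q(x, ·) : Z → ℝ a rating function taking values in [0,1], Δ = 1, and ε > 0. Let τ ∈ ℝ with T = {z ∈ Z : q(x,z) ≥ τ} and T̄ = Z \ T both nonempty, and suppose the range Δ̄ = max_{z∈Z} q(x,z) − min_{z∈Z} q(x,z) satisfies 0 < Δ̄ ≤ 1. If the Exponential mechanism outputs an element of T with probability at least 1/2, i.e. ∑_{z∈T} exp(ε·q(x,z)/2) / ∑_{z∈Z} exp(ε·q(x,z)/2) ≥ 1/2, then ε ≥ 2·ln( (|Z| − |T|) / |T| ). -/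
/-- Specialized necessary condition for SynTF (ratings in `[0,1]`, `Δ = 1`,
`p = 1/2`): if the Exponential mechanism outputs a useful element (rating at
least `τ`) with probability at least `1/2`, then
`ε ≥ 2·ln((|Z| - |T|)/|T|)`; i.e. `ε` must grow logarithmically in `|Z|`. -/
theorem expMech_necessary_condition_specialized
    {Z : Type*} [Fintype Z] [Nonempty Z] [DecidableEq Z]
    (q : Z → ℝ) (hq : ∀ z, q z ∈ Set.Icc (0 : ℝ) 1)
    (ε τ : ℝ) (hε : 0 < ε)
    (T : Finset Z) (hT : ∀ z, z ∈ T ↔ τ ≤ q z)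
    (hTne : T.Nonempty) (hTc : Tᶜ.Nonempty)
    (Δbar : ℝ)
    (hΔbar : Δbar = Finset.univ.sup' Finset.univ_nonempty q -
        Finset.univ.inf' Finset.univ_nonempty q)
    (hΔbar_pos : 0 < Δbar) (hΔbar_le : Δbar ≤ 1)
    (hprob : (1 : ℝ) / 2 ≤ (∑ z ∈ T, Real.exp (ε * q z / 2)) /
        (∑ z, Real.exp (ε * q z / 2))) :
    2 * Real.log (((Fintype.card Z : ℝ) - (T.card : ℝ)) / (T.card : ℝ)) ≤ ε := by
  set f : Z → ℝ := fun z => Real.exp (ε * q z / 2) with hf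
  have htotal_pos : 0 < ∑ z, f z :=
    Finset.sum_pos (fun z _ => Real.exp_pos _) Finset.univ_nonempty
  have hsplit : ∑ z ∈ T, f z + ∑ z ∈ Tᶜ, f z = ∑ z, f z :=
    Finset.sum_add_sum_compl T f
  -- from hprob: total ≤ 2 * sum_T
  have h1 : ∑ z, f z ≤ 2 * ∑ z ∈ T, f z := by
    have := (div_le_div_iff₀ (by norm_num) htotal_pos).mp hprob
    linarith
  have h2 : ∑ z ∈ Tᶜ, f z ≤ ∑ z ∈ T, f z := by linarith
  -- lower bound on complement sum
  have h3 : (Tᶜ.card : ℝ) ≤ ∑ z ∈ Tᶜ, f z := by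
    calc (Tᶜ.card : ℝ) = ∑ _z ∈ Tᶜ, (1 : ℝ) := by simp
    _ ≤ ∑ z ∈ Tᶜ, f z := Finset.sum_le_sum fun z _ => by
        rw [hf]
        have : (0:ℝ) ≤ ε * q z / 2 := by
          have := (hq z).1; positivity
        simpa using Real.one_le_exp this
  -- upper bound on T sum
  have h4 : ∑ z ∈ T, f z ≤ (T.card : ℝ) * Real.exp (ε / 2) := by
    have := Finset.sum_le_card_nsmul T f (Real.exp (ε / 2)) (fun z _ => by
      apply Real.exp_le_exp.mpr
      have h := (hq z).2
      nlinarith)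
    simpa [nsmul_eq_mul] using this
  have hTcard_pos : (0:ℝ) < (T.card : ℝ) := by
    exact_mod_cast Finset.card_pos.mpr hTne
  have hkey : (Tᶜ.card : ℝ) / (T.card : ℝ) ≤ Real.exp (ε / 2) := by
    rw [div_le_iff₀ hTcard_pos]
    nlinarith
  have hcast : ((Fintype.card Z : ℝ) - (T.card : ℝ)) = (Tᶜ.card : ℝ) := by
    rw [Finset.card_compl]
    have : T.card ≤ Fintype.card Z := T.card_le_univ
    push_cast [this]
    ring
  rw [hcast]
  have hlog := Real.log_le_log (by positivity) hkey
  rw [Real.log_exp] at hlog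
  linarith
end

section
/- Let V be a finite nonempty set and π : V → V → ℝ a kernel with π(v,w) > 0 for all v, w. Fix w ∈ V and define the single-step output probability p_c(w) = ∑_{v∈V} c(v)·π(v,w) for a probability vector c on V. Then (i) for all probability vectors c₁, c₂ on V, p_{c₁}(w)/p_{c₂}(w) ≤ max_{v∈V} π(v,w) / min_{v∈V} π(v,w), and (ii) this bound is attained: there exist probability vectors c₁, c₂ (namely point masses on the maximizing and minimizing v) with p_{c₁}(w)/p_{c₂}(w) = max_{v∈V} π(v,w) / min_{v∈V} π(v,w). Hence the per-word privacy loss of the sample-and-substitute step equals max_{w∈V} ln( max_{v} π(v,w) / min_{v} π(v,w) ), and this value can be computed independently of the documents being anonymized. -/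
section aux
variable {V : Type*} [Fintype V] [Nonempty V]

lemma syntf_sum_le_sup (π : V → V → ℝ) (w : V) (c : V → ℝ)
    (hc : ∀ v, 0 ≤ c v) (hs : (∑ v, c v) = 1) :
    (∑ v, c v * π v w) ≤ Finset.univ.sup' Finset.univ_nonempty (fun v => π v w) := by
  calc (∑ v, c v * π v w)
      ≤ ∑ v, c v * Finset.univ.sup' Finset.univ_nonempty (fun v => π v w) := by
        refine Finset.sum_le_sum fun v _ => ?_
        exact mul_le_mul_of_nonneg_left (Finset.le_sup' (fun v => π v w) (Finset.mem_univ v)) (hc v)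
    _ = _ := by rw [← Finset.sum_mul, hs, one_mul]

lemma syntf_inf_le_sum (π : V → V → ℝ) (w : V) (c : V → ℝ)
    (hc : ∀ v, 0 ≤ c v) (hs : (∑ v, c v) = 1) :
    Finset.univ.inf' Finset.univ_nonempty (fun v => π v w) ≤ (∑ v, c v * π v w) := by
  calc Finset.univ.inf' Finset.univ_nonempty (fun v => π v w)
      = ∑ v, c v * Finset.univ.inf' Finset.univ_nonempty (fun v => π v w) := by
        rw [← Finset.sum_mul, hs, one_mul]
    _ ≤ ∑ v, c v * π v w := by
        refine Finset.sum_le_sum fun v _ => ?_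
        exact mul_le_mul_of_nonneg_left (Finset.inf'_le (fun v => π v w) (Finset.mem_univ v)) (hc v)

lemma syntf_inf_pos (π : V → V → ℝ) (hπ : ∀ v w, 0 < π v w) (w : V) :
    0 < Finset.univ.inf' Finset.univ_nonempty (fun v => π v w) := by
  obtain ⟨v, -, hv⟩ := Finset.exists_mem_eq_inf' Finset.univ_nonempty (fun v => π v w)
  rw [hv]; exact hπ v w

lemma syntf_ratio_le (π : V → V → ℝ) (hπ : ∀ v w, 0 < π v w) (w : V)
    (c₁ c₂ : V → ℝ) (h₁ : ∀ v, 0 ≤ c₁ v) (hs₁ : (∑ v, c₁ v) = 1)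
    (h₂ : ∀ v, 0 ≤ c₂ v) (hs₂ : (∑ v, c₂ v) = 1) :
    (∑ v, c₁ v * π v w) / (∑ v, c₂ v * π v w)
      ≤ (Finset.univ.sup' Finset.univ_nonempty fun v => π v w) /
        (Finset.univ.inf' Finset.univ_nonempty fun v => π v w) := by
  have hm := syntf_inf_pos π hπ w
  have hM : (0:ℝ) ≤ Finset.univ.sup' Finset.univ_nonempty (fun v => π v w) := by
    obtain ⟨v, -, hv⟩ := Finset.exists_mem_eq_sup' Finset.univ_nonempty (fun v => π v w)
    rw [hv]; exact (hπ v w).le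
  exact div_le_div₀ hM (syntf_sum_le_sup π w c₁ h₁ hs₁) hm (syntf_inf_le_sum π w c₂ h₂ hs₂)

lemma syntf_attained (π : V → V → ℝ) (hπ : ∀ v w, 0 < π v w) (w : V) :
    ∃ c₁ c₂ : V → ℝ, (∀ v, 0 ≤ c₁ v) ∧ (∑ v, c₁ v) = 1 ∧
        (∀ v, 0 ≤ c₂ v) ∧ (∑ v, c₂ v) = 1 ∧
        (∑ v, c₁ v * π v w) / (∑ v, c₂ v * π v w)
          = (Finset.univ.sup' Finset.univ_nonempty fun v => π v w) /
            (Finset.univ.inf' Finset.univ_nonempty fun v => π v w) := by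
  classical
  obtain ⟨v₁, -, hv₁⟩ := Finset.exists_mem_eq_sup' Finset.univ_nonempty (fun v => π v w)
  obtain ⟨v₂, -, hv₂⟩ := Finset.exists_mem_eq_inf' Finset.univ_nonempty (fun v => π v w)
  refine ⟨(fun v => if v = v₁ then 1 else 0), (fun v => if v = v₂ then 1 else 0),
    fun v => by positivity, by simp, fun v => by positivity, by simp, ?_⟩
  have e1 : (∑ v, (if v = v₁ then (1:ℝ) else 0) * π v w) = π v₁ w := by
    simp [ite_mul]
  have e2 : (∑ v, (if v = v₂ then (1:ℝ) else 0) * π v w) = π v₂ w := by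
    simp [ite_mul]
  rw [e1, e2, hv₁, hv₂]

end aux

/-- Tight worst-case bound for the sample-and-substitute step of SynTF:
(i) for a fixed output word `w`, the ratio of output probabilities over any
two probability vectors `c₁, c₂` is at most `max_v π(v,w) / min_v π(v,w)`;
(ii) the bound is attained by point masses; hence (iii) the per-word privacy
loss equals `max_w ln(max_v π(v,w) / min_v π(v,w))`, independently of the
documents being anonymized. -/
theorem syntf_tight_per_word_loss
    {V : Type*} [Fintype V] [Nonempty V]
    (π : V → V → ℝ) (hπ : ∀ v w, 0 < π v w) (w : V) :
    (∀ c₁ c₂ : V → ℝ, (∀ v, 0 ≤ c₁ v) → (∑ v, c₁ v) = 1 →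
        (∀ v, 0 ≤ c₂ v) → (∑ v, c₂ v) = 1 →
        (∑ v, c₁ v * π v w) / (∑ v, c₂ v * π v w)
          ≤ (Finset.univ.sup' Finset.univ_nonempty fun v => π v w) /
            (Finset.univ.inf' Finset.univ_nonempty fun v => π v w)) ∧
    (∃ c₁ c₂ : V → ℝ, (∀ v, 0 ≤ c₁ v) ∧ (∑ v, c₁ v) = 1 ∧
        (∀ v, 0 ≤ c₂ v) ∧ (∑ v, c₂ v) = 1 ∧
        (∑ v, c₁ v * π v w) / (∑ v, c₂ v * π v w)
          = (Finset.univ.sup' Finset.univ_nonempty fun v => π v w) /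
            (Finset.univ.inf' Finset.univ_nonempty fun v => π v w)) ∧
    IsGreatest
      {x : ℝ | ∃ (c₁ c₂ : V → ℝ) (w' : V),
        (∀ v, 0 ≤ c₁ v) ∧ (∑ v, c₁ v) = 1 ∧
        (∀ v, 0 ≤ c₂ v) ∧ (∑ v, c₂ v) = 1 ∧
        x = Real.log ((∑ v, c₁ v * π v w') / (∑ v, c₂ v * π v w'))}
      (Finset.univ.sup' Finset.univ_nonempty fun w' =>
        Real.log ((Finset.univ.sup' Finset.univ_nonempty fun v => π v w') /
          (Finset.univ.inf' Finset.univ_nonempty fun v => π v w'))) := by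
  refine ⟨fun c₁ c₂ h₁ hs₁ h₂ hs₂ => syntf_ratio_le π hπ w c₁ c₂ h₁ hs₁ h₂ hs₂,
    syntf_attained π hπ w, ?_, ?_⟩
  · -- membership
    obtain ⟨w', -, hw'⟩ := Finset.exists_mem_eq_sup' Finset.univ_nonempty
      (fun w' => Real.log ((Finset.univ.sup' Finset.univ_nonempty fun v => π v w') /
          (Finset.univ.inf' Finset.univ_nonempty fun v => π v w')))
    obtain ⟨c₁, c₂, h₁, hs₁, h₂, hs₂, heq⟩ := syntf_attained π hπ w'
    exact ⟨c₁, c₂, w', h₁, hs₁, h₂, hs₂, by rw [heq, ← hw']⟩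
  · rintro x ⟨c₁, c₂, w', h₁, hs₁, h₂, hs₂, rfl⟩
    have hpos₁ := lt_of_lt_of_le (syntf_inf_pos π hπ w') (syntf_inf_le_sum π w' c₁ h₁ hs₁)
    have hpos₂ := lt_of_lt_of_le (syntf_inf_pos π hπ w') (syntf_inf_le_sum π w' c₂ h₂ hs₂)
    calc Real.log ((∑ v, c₁ v * π v w') / (∑ v, c₂ v * π v w'))
        ≤ Real.log ((Finset.univ.sup' Finset.univ_nonempty fun v => π v w') /
            (Finset.univ.inf' Finset.univ_nonempty fun v => π v w')) :=
          Real.log_le_log (div_pos hpos₁ hpos₂)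
            (syntf_ratio_le π hπ w' c₁ c₂ h₁ hs₁ h₂ hs₂)
      _ ≤ _ := Finset.le_sup' (fun w' => Real.log ((Finset.univ.sup' Finset.univ_nonempty fun v => π v w') / (Finset.univ.inf' Finset.univ_nonempty fun v => π v w'))) (Finset.mem_univ w')
end

section
/- Let V be a finite nonempty set and π : V → V → ℝ a kernel of probability vectors on V with π(v,w) > 0 for all v, w. Define ℓ = max_{w∈V} ( max_{v∈V} π(v,w) / min_{v∈V} π(v,w) ). Then for every n ∈ ℕ, every output count vector r : V → ℕ with ∑_{w∈V} r(w) = n, and all probability vectors c₁, c₂ on V, the multinomial output probabilities of the SynTF mechanism satisfy (n!/∏_w r(w)!) · ∏_{w∈V} (∑_{v∈V} c₁(v)π(v,w))^{r(w)} ≤ ℓ^n · (n!/∏_w r(w)!) · ∏_{w∈V} (∑_{v∈V} c₂(v)π(v,w))^{r(w)}; that is, SynTF with output length n fulfills (n·ln ℓ)-differential privacy, where ℓ is the exact per-word privacy loss factor of the substitution kernel. -/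
/-- Tight differential privacy bound for SynTF: with
`ℓ = max_w (max_v π(v,w) / min_v π(v,w))` the exact per-word privacy loss
factor of the substitution kernel, the SynTF mechanism with output length `n`
fulfills `(n·ln ℓ)`-differential privacy, i.e. the multinomial output
probabilities differ by at most a factor `ℓ^n`. -/
theorem syntf_tight_dp
    {V : Type*} [Fintype V] [Nonempty V]
    (π : V → V → ℝ) (hπ : ∀ v w, 0 < π v w) (hπ1 : ∀ v, ∑ w, π v w = 1)
    (ℓ : ℝ)
    (hℓ : ℓ = Finset.univ.sup' Finset.univ_nonempty fun w =>
        (Finset.univ.sup' Finset.univ_nonempty fun v => π v w) /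
        (Finset.univ.inf' Finset.univ_nonempty fun v => π v w))
    (n : ℕ) (r : V → ℕ) (hr : ∑ w, r w = n)
    (c₁ c₂ : V → ℝ)
    (hc₁0 : ∀ v, 0 ≤ c₁ v) (hc₁1 : ∑ v, c₁ v = 1)
    (hc₂0 : ∀ v, 0 ≤ c₂ v) (hc₂1 : ∑ v, c₂ v = 1) :
    ((n.factorial : ℝ) / ∏ w, ((r w).factorial : ℝ)) *
        ∏ w, (∑ v, c₁ v * π v w) ^ (r w)
      ≤ ℓ ^ n *
        (((n.factorial : ℝ) / ∏ w, ((r w).factorial : ℝ)) *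
          ∏ w, (∑ v, c₂ v * π v w) ^ (r w)) := by
  set sup : V → ℝ := fun w => Finset.univ.sup' Finset.univ_nonempty fun v => π v w with hsup
  set inf : V → ℝ := fun w => Finset.univ.inf' Finset.univ_nonempty fun v => π v w with hinf
  have hinfpos : ∀ w, 0 < inf w := fun w => by
    obtain ⟨v, _, hv⟩ := Finset.exists_mem_eq_inf' (Finset.univ_nonempty) (fun v => π v w)
    rw [hinf]; dsimp only; rw [hv]; exact hπ v w
  have hkey : ∀ w, (∑ v, c₁ v * π v w) ≤ ℓ * (∑ v, c₂ v * π v w) := by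
    intro w
    have h1 : (∑ v, c₁ v * π v w) ≤ sup w := by
      calc (∑ v, c₁ v * π v w) ≤ ∑ v, c₁ v * sup w := by
            apply Finset.sum_le_sum
            intro v _
            exact mul_le_mul_of_nonneg_left
              (Finset.le_sup' (fun v => π v w) (Finset.mem_univ v)) (hc₁0 v)
        _ = sup w := by rw [← Finset.sum_mul, hc₁1, one_mul]
    have h2 : inf w ≤ ∑ v, c₂ v * π v w := by
      calc inf w = ∑ v, c₂ v * inf w := by rw [← Finset.sum_mul, hc₂1, one_mul]
        _ ≤ ∑ v, c₂ v * π v w := by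
            apply Finset.sum_le_sum
            intro v _
            exact mul_le_mul_of_nonneg_left
              (Finset.inf'_le (fun v => π v w) (Finset.mem_univ v)) (hc₂0 v)
    have hℓw : sup w / inf w ≤ ℓ := by
      rw [hℓ]; exact Finset.le_sup' (fun w => sup w / inf w) (Finset.mem_univ w)
    have h2' : 0 < ∑ v, c₂ v * π v w := lt_of_lt_of_le (hinfpos w) h2
    calc (∑ v, c₁ v * π v w) ≤ sup w := h1
      _ = (sup w / inf w) * inf w := by rw [div_mul_cancel₀ _ (ne_of_gt (hinfpos w))]
      _ ≤ ℓ * (∑ v, c₂ v * π v w) := by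
          apply mul_le_mul hℓw h2 (le_of_lt (hinfpos w))
          linarith [div_nonneg (le_trans (le_of_lt (hinfpos w))
            (le_trans (by
              have := Finset.inf'_le (fun v => π v w) (Finset.mem_univ (Classical.arbitrary V))
              have := Finset.le_sup' (fun v => π v w) (Finset.mem_univ (Classical.arbitrary V))
              linarith) (le_refl (sup w)))) (le_of_lt (hinfpos w))]
  have hA1 : ∀ w, 0 ≤ ∑ v, c₁ v * π v w := fun w =>
    Finset.sum_nonneg fun v _ => mul_nonneg (hc₁0 v) (le_of_lt (hπ v w))
  have hprod : (∏ w, (∑ v, c₁ v * π v w) ^ (r w)) ≤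
      ∏ w, (ℓ * (∑ v, c₂ v * π v w)) ^ (r w) := by
    apply Finset.prod_le_prod
    · intro w _; exact pow_nonneg (hA1 w) _
    · intro w _; exact pow_le_pow_left₀ (hA1 w) (hkey w) _
  have heq : (∏ w, (ℓ * (∑ v, c₂ v * π v w)) ^ (r w)) =
      ℓ ^ n * ∏ w, (∑ v, c₂ v * π v w) ^ (r w) := by
    simp_rw [mul_pow, Finset.prod_mul_distrib, Finset.prod_pow_eq_pow_sum, hr]
  have hF : 0 ≤ (n.factorial : ℝ) / ∏ w, ((r w).factorial : ℝ) := by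
    apply div_nonneg (Nat.cast_nonneg _)
    exact Finset.prod_nonneg fun w _ => Nat.cast_nonneg _
  calc ((n.factorial : ℝ) / ∏ w, ((r w).factorial : ℝ)) *
        ∏ w, (∑ v, c₁ v * π v w) ^ (r w)
      ≤ ((n.factorial : ℝ) / ∏ w, ((r w).factorial : ℝ)) *
        (ℓ ^ n * ∏ w, (∑ v, c₂ v * π v w) ^ (r w)) := by
        rw [← heq]; exact mul_le_mul_of_nonneg_left hprod hF
    _ = ℓ ^ n * (((n.factorial : ℝ) / ∏ w, ((r w).factorial : ℝ)) *
          ∏ w, (∑ v, c₂ v * π v w) ^ (r w)) := by ring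
end
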